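/- arXiv:1508.05244 — 3 statements merged into one kernel-verified Lean document; each statement's English description precedes it below -/
import Mathlib

section
/- For fractal percolation with parameters d ≥ 1, M ≥ 2 and p > M^{-d}, and any N ≥ 1, the conditional probability that every cube of Q_N is surviving, given non-extinction, equals ((1−q) p^{M^d/(M^d−1)})^{M^{dN}−1}; that is, P(Z_N = M^{dN} | E ≠ ∅) = ((1−q) p^{M^d/(M^d−1)})^{M^{dN}−1}, where q = P(E = ∅) is the extinction probability. -/
open MeasureTheory ProbabilityTheory Filter Metric Set
open scoped ENNReal ProbabilityTheory RealInnerProductSpace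

noncomputable section

/-- The closed `M`-adic cube of level `n` in `[0,1]^d` indexed by `k : Fin d → ℕ`
(with `k i < M ^ n`). -/
def mCube (d M n : ℕ) (k : Fin d → ℕ) : Set (EuclideanSpace ℝ (Fin d)) :=
  {x | ∀ i, (k i : ℝ) / (M : ℝ) ^ n ≤ x i ∧ x i ≤ ((k i : ℝ) + 1) / (M : ℝ) ^ n}

/-- Given retention decisions for all `M`-adic cubes of all levels `≥ 1`, the predicate saying
that the level-`n` cube indexed by `k` is retained at every step of the construction, i.e. that
it is one of the cubes constituting `E_n`. -/
def kept (M d : ℕ) (retain : ℕ × (Fin d → ℕ) → Bool) : ℕ → (Fin d → ℕ) → Prop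
  | 0, _ => True
  | n + 1, k => kept M d retain n (fun i => k i / M) ∧ retain (n + 1, k) = true

/-- The union `E_n` of the retained cubes of level `n`, for a given retention configuration. -/
def percLevel (d M n : ℕ) (retain : ℕ × (Fin d → ℕ) → Bool) :
    Set (EuclideanSpace ℝ (Fin d)) :=
  ⋃ (k : Fin d → ℕ) (_ : (∀ i, k i < M ^ n) ∧ kept M d retain n k), mCube d M n k

/-- The fractal percolation limit set `E = ⋂ n, E_n`, for a given retention configuration. -/
def percLimit (d M : ℕ) (retain : ℕ × (Fin d → ℕ) → Bool) :
    Set (EuclideanSpace ℝ (Fin d)) :=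
  ⋂ n, percLevel d M n retain

/-- The almost sure Hausdorff dimension `s = d + log p / log M` of the fractal percolation
limit set conditioned on non-extinction. -/
def percDim (d M : ℕ) (p : ℝ) : ℝ := d + Real.log p / Real.log M

/-- A level-`n` cube is *surviving* if for every `m ≥ 1` it contains a retained cube of level
`n + m`. -/
def survivingPerc (M d : ℕ) (retain : ℕ × (Fin d → ℕ) → Bool) (n : ℕ) (k : Fin d → ℕ) :
    Prop :=
  ∀ m : ℕ, ∃ k' : Fin d → ℕ, (∀ i, k' i < M ^ (n + m)) ∧ (∀ i, k' i / M ^ m = k i) ∧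
    kept M d retain (n + m) k'

/-- `Z_n` : the number of surviving cubes of level `n`. -/
def Zperc (M d : ℕ) (retain : ℕ × (Fin d → ℕ) → Bool) (n : ℕ) : ℕ :=
  Set.ncard {k : Fin d → ℕ | (∀ i, k i < M ^ n) ∧ survivingPerc M d retain n k}

/-!
`Z_N = M^(dN)` holds exactly when every cube of levels `1, …, N` is retained and, below each
of the `M^(dN)` cubes `Q` of level `N`, the construction restricted to the subtree of `Q` goes on
forever. These events are determined by pairwise disjoint sets of independent retention
decisions, and each subtree is a copy of the whole process, which survives with probability
`1 - q` (survival of every level is the same as `E ≠ ∅`, by Cantor's intersection theorem).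
Hence `P(Z_N = M^(dN)) = p^(M^d + ⋯ + M^(dN)) (1 - q)^(M^(dN))`; this event implies
`E ≠ ∅`, and `M^d + ⋯ + M^(dN) = M^d (M^(dN) - 1) / (M^d - 1)`.
-/

namespace ProbabilityTheory

variable {Ω : Type*} {mΩ : MeasurableSpace Ω} {P : Measure Ω} [IsProbabilityMeasure P]

theorem map_eq_map_of_measure_true_eq {f g : Ω → Bool} (hf : Measurable f) (hg : Measurable g)
    (h : P {ω | f ω = true} = P {ω | g ω = true}) : P.map f = P.map g := by
  have hfalse : ∀ u : Ω → Bool, Measurable u →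
      P.map u {false} = 1 - P {ω | u ω = true} := by
    intro u hu
    have hcompl : u ⁻¹' {false} = (u ⁻¹' {true})ᶜ := by ext; simp
    rw [Measure.map_apply hu (measurableSet_singleton _), hcompl,
      prob_compl_eq_one_sub (hu (measurableSet_singleton true))]
    rfl
  refine Measure.ext_of_singleton fun b => ?_
  cases b
  · rw [hfalse f hf, hfalse g hg, h]
  · rwa [Measure.map_apply hf (measurableSet_singleton _),
      Measure.map_apply hg (measurableSet_singleton _)]

theorem map_fun_eq_of_iIndepFun {ι : Type*} {X Y : ι → Ω → Bool}
    (hX : ∀ i, Measurable (X i)) (hY : ∀ i, Measurable (Y i))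
    (hXi : iIndepFun X P) (hYi : iIndepFun Y P)
    (h : ∀ i, P {ω | X i ω = true} = P {ω | Y i ω = true}) :
    P.map (fun ω i => X i ω) = P.map (fun ω i => Y i ω) := by
  rw [hXi.map_fun_eq_infinitePi_map hX, hYi.map_fun_eq_infinitePi_map hY]
  simp_rw [map_eq_map_of_measure_true_eq (hX _) (hY _) (h _)]

theorem iIndep.measure_biInter_eq_prod {ι κ : Type*} {m : ι → MeasurableSpace Ω}
    (h_le : ∀ i, m i ≤ mΩ) (h : iIndep m P) {J : κ → Set ι} {s : Finset κ}
    (hJ : (s : Set κ).PairwiseDisjoint J) {E : κ → Set Ω}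
    (hE : ∀ a ∈ s, MeasurableSet[⨆ i ∈ J a, m i] (E a)) :
    P (⋂ a ∈ s, E a) = ∏ a ∈ s, P (E a) := by
  classical
  induction s using Finset.induction_on with
  | empty => simp
  | insert a s ha ih =>
    rw [Finset.set_biInter_insert, Finset.prod_insert ha,
      ← ih (hJ.subset (by simp)) fun b hb => hE b (Finset.mem_insert_of_mem hb)]
    have hdisj : Disjoint (J a) (⋃ b ∈ s, J b) :=
      Set.disjoint_iUnion₂_right.2 fun b hb => hJ (by simp) (by simp [hb])
        (by rintro rfl; exact ha hb)
    refine (Indep_iff _ _ _).1 (indep_iSup_of_disjoint h_le h hdisj) _ _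
      (hE a (Finset.mem_insert_self a s)) (Finset.measurableSet_biInter s fun b hb => ?_)
    have hle : ⨆ i ∈ J b, m i ≤ ⨆ i ∈ ⋃ b ∈ s, J b, m i :=
      iSup₂_mono' fun i hi => ⟨i, Set.mem_iUnion₂.2 ⟨b, hb, hi⟩, le_rfl⟩
    exact hle _ (hE b (Finset.mem_insert_of_mem hb))

theorem measurable_biSup_comap {ι β : Type*} [mβ : MeasurableSpace β] {X : ι → Ω → β}
    {J : Set ι} {i : ι} (hi : i ∈ J) : Measurable[⨆ j ∈ J, mβ.comap (X j)] (X i) :=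
  Measurable.of_comap_le (le_iSup₂ (f := fun j (_ : j ∈ J) => mβ.comap (X j)) i hi)

theorem measurableSet_biSup_comap_preimage {ι κ β : Type*} [mβ : MeasurableSpace β]
    {X : ι → Ω → β} {J : Set ι} {g : κ → ι} (hg : ∀ j, g j ∈ J)
    {S : Set (κ → β)} (hS : MeasurableSet S) :
    MeasurableSet[⨆ i ∈ J, mβ.comap (X i)] ((fun ω j => X (g j) ω) ⁻¹' S) := by
  let _ : MeasurableSpace Ω := ⨆ i ∈ J, mβ.comap (X i)
  exact hS.preimage (measurable_pi_lambda _ fun j => measurable_biSup_comap (hg j))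

end ProbabilityTheory

namespace FractalPercolation

/-- `(n, k)` indexes the cube `mCube d M n k` of `Q_n`; it is one of the `M ^ (d * n)` cubes of
`[0,1]^d` when `k ∈ box M d n`. -/
abbrev Idx (d : ℕ) := ℕ × (Fin d → ℕ)

variable {M d : ℕ}

def box (M d n : ℕ) : Finset (Fin d → ℕ) :=
  Fintype.piFinset fun _ => Finset.range (M ^ n)

@[simp]
theorem mem_box {n : ℕ} {k : Fin d → ℕ} : k ∈ box M d n ↔ ∀ i, k i < M ^ n := by
  simp [box]

theorem card_box (n : ℕ) : (box M d n).card = M ^ (d * n) := by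
  simp [box, pow_mul']

theorem zero_mem_box (hM : 0 < M) (n : ℕ) : (0 : Fin d → ℕ) ∈ box M d n :=
  mem_box.2 fun _ => pow_pos hM n

theorem div_pow_mem_box {n m : ℕ} {k : Fin d → ℕ} (hk : k ∈ box M d (n + m)) :
    (fun i => k i / M ^ m) ∈ box M d n :=
  mem_box.2 fun i => Nat.div_lt_of_lt_mul (by rw [← pow_add, add_comm]; exact mem_box.1 hk i)

theorem div_mem_box {n : ℕ} {k : Fin d → ℕ} (hk : k ∈ box M d (n + 1)) :
    (fun i => k i / M) ∈ box M d n := by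
  simpa using div_pow_mem_box (m := 1) hk

/-- The index of the cube `m` levels below the cube `k`, at relative position `j`. -/
def descendant (M : ℕ) (k : Fin d → ℕ) (m : ℕ) (j : Fin d → ℕ) : Fin d → ℕ :=
  fun i => k i * M ^ m + j i

theorem descendant_div {k j : Fin d → ℕ} {m : ℕ} (hj : j ∈ box M d m) (i : Fin d) :
    descendant M k m j i / M ^ m = k i := by
  have hpos : 0 < M ^ m := (Nat.zero_le _).trans_lt (mem_box.1 hj i)
  rw [descendant, mul_comm, Nat.mul_add_div hpos, Nat.div_eq_of_lt (mem_box.1 hj i), add_zero]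

theorem descendant_mem_box {n m : ℕ} {k j : Fin d → ℕ} (hk : k ∈ box M d n)
    (hj : j ∈ box M d m) : descendant M k m j ∈ box M d (n + m) := by
  refine mem_box.2 fun i => ?_
  have h := Nat.mul_le_mul_right (M ^ m) (mem_box.1 hk i)
  rw [descendant, pow_add]
  nlinarith [mem_box.1 hj i]

theorem descendant_succ_div (hM : 0 < M) (k j : Fin d → ℕ) (m : ℕ) :
    (fun i => descendant M k (m + 1) j i / M) = descendant M k m (fun i => j i / M) := by
  funext i
  rw [descendant, descendant, pow_succ, ← mul_assoc, Nat.add_comm, Nat.add_mul_div_right _ _ hM,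
    Nat.add_comm]

/-- Reindexing of the tree of cubes onto the subtree rooted at the level-`N` cube `k`. -/
def shiftIdx (M N : ℕ) (k : Fin d → ℕ) (q : Idx d) : Idx d :=
  (N + q.1, descendant M k q.1 q.2)

theorem shiftIdx_injective (M N : ℕ) (k : Fin d → ℕ) :
    Function.Injective (shiftIdx M N k) := by
  rintro ⟨t, j⟩ ⟨t', j'⟩ h
  simp only [shiftIdx, Prod.mk.injEq, add_right_inj] at h
  obtain ⟨rfl, h⟩ := h
  refine Prod.ext rfl (funext fun i => ?_)
  simpa [descendant] using congrFun h i

def validIdx (M d : ℕ) : Set (Idx d) := {q | 1 ≤ q.1 ∧ q.2 ∈ box M d q.1}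

theorem shiftIdx_mem_validIdx {N : ℕ} {k : Fin d → ℕ} (hk : k ∈ box M d N) {q : Idx d}
    (hq : q ∈ validIdx M d) : shiftIdx M N k q ∈ validIdx M d :=
  ⟨Nat.le_add_left_of_le hq.1, descendant_mem_box hk hq.2⟩

theorem kept_ancestor {r : Idx d → Bool} {n : ℕ} :
    ∀ {m : ℕ} {k : Fin d → ℕ}, kept M d r (n + m) k → kept M d r n (fun i => k i / M ^ m)
  | 0, k, h => by simpa using h
  | m + 1, k, h => by
    simpa [Nat.div_div_eq_div_mul, pow_succ'] using kept_ancestor (m := m) h.1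

theorem kept_congr {r r' : Idx d → Bool} (h : ∀ q ∈ validIdx M d, r q = r' q) :
    ∀ {n : ℕ} {k : Fin d → ℕ}, k ∈ box M d n → (kept M d r n k ↔ kept M d r' n k)
  | 0, _, _ => Iff.rfl
  | n + 1, k, hk => and_congr (kept_congr h (div_mem_box hk))
      (by rw [h (n + 1, k) ⟨by omega, hk⟩])

theorem kept_descendant (hM : 0 < M) {r : Idx d → Bool} {N : ℕ} {k : Fin d → ℕ} :
    ∀ {m : ℕ} {j : Fin d → ℕ}, j ∈ box M d m →
      (kept M d r (N + m) (descendant M k m j) ↔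
        kept M d r N k ∧ kept M d (r ∘ shiftIdx M N k) m j)
  | 0, j, hj => by
    have : descendant M k 0 j = k := funext fun i => by simpa using descendant_div hj i
    simp [this, kept]
  | m + 1, j, hj => by
    change kept M d r (N + m) _ ∧ _ ↔ _ ∧ kept M d _ m _ ∧ _
    rw [descendant_succ_div hM, kept_descendant hM (div_mem_box hj), and_assoc]
    rfl

def alive (M d : ℕ) (r : Idx d → Bool) : Prop :=
  ∀ n, ∃ k ∈ box M d n, kept M d r n k

theorem alive_congr {r r' : Idx d → Bool} (h : ∀ q ∈ validIdx M d, r q = r' q) :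
    alive M d r ↔ alive M d r' :=
  forall_congr' fun _ => exists_congr fun _ => and_congr_right fun hk => kept_congr h hk

theorem survivingPerc_iff (hM : 0 < M) {r : Idx d → Bool} {N : ℕ} {k : Fin d → ℕ}
    (hk : k ∈ box M d N) :
    survivingPerc M d r N k ↔ kept M d r N k ∧ alive M d (r ∘ shiftIdx M N k) := by
  constructor
  · intro hs
    have key : ∀ m, ∃ j ∈ box M d m,
        kept M d r N k ∧ kept M d (r ∘ shiftIdx M N k) m j := by
      intro m
      obtain ⟨k', -, hdiv, hkept⟩ := hs m
      have hk' : descendant M k m (fun i => k' i % M ^ m) = k' :=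
        funext fun i => by rw [descendant, ← hdiv i, Nat.div_add_mod']
      have hj : (fun i => k' i % M ^ m) ∈ box M d m :=
        mem_box.2 fun i => Nat.mod_lt _ (pow_pos hM m)
      exact ⟨_, hj, (kept_descendant hM hj).1 (by rwa [hk'])⟩
    obtain ⟨-, -, hkept, -⟩ := key 0
    exact ⟨hkept, fun m => (key m).imp fun j h => ⟨h.1, h.2.2⟩⟩
  · rintro ⟨hkept, halive⟩ m
    obtain ⟨j, hj, hkj⟩ := halive m
    exact ⟨descendant M k m j, mem_box.1 (descendant_mem_box hk hj), descendant_div hj,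
      (kept_descendant hM hj).2 ⟨hkept, hkj⟩⟩

theorem alive_of_survivingPerc {r : Idx d → Bool} {N : ℕ} {k : Fin d → ℕ}
    (h : survivingPerc M d r N k) : alive M d r := by
  intro n
  obtain ⟨k', hk', -, hkept⟩ := h n
  rw [add_comm] at hk' hkept
  exact ⟨_, div_pow_mem_box (mem_box.2 hk'), kept_ancestor hkept⟩

def cubesUpTo (M d N : ℕ) : Finset (Idx d) :=
  (Finset.range N).biUnion fun t => {t + 1} ×ˢ box M d (t + 1)

theorem mem_cubesUpTo {N : ℕ} {q : Idx d} :
    q ∈ cubesUpTo M d N ↔ q ∈ validIdx M d ∧ q.1 ≤ N := by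
  obtain ⟨t, j⟩ := q
  simp only [cubesUpTo, Finset.mem_biUnion, Finset.mem_range, Finset.mem_product,
    Finset.mem_singleton, validIdx, Set.mem_ofPred_eq]
  constructor
  · rintro ⟨t, ht, rfl, hj⟩
    exact ⟨⟨by omega, hj⟩, ht⟩
  · rintro ⟨⟨ht, hj⟩, htN⟩
    exact ⟨t - 1, by omega, by omega, by rwa [Nat.sub_add_cancel ht]⟩

theorem card_cubesUpTo (N : ℕ) :
    (cubesUpTo M d N).card = ∑ t ∈ Finset.range N, M ^ (d * (t + 1)) := by
  rw [cubesUpTo, Finset.card_biUnion]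
  · simp [card_box]
  · intro t _ t' _ hne
    simp only [Function.onFun, Finset.disjoint_left, Finset.mem_product, Finset.mem_singleton]
    omega

theorem forall_kept_iff (hM : 0 < M) (r : Idx d → Bool) (N : ℕ) :
    (∀ k ∈ box M d N, kept M d r N k) ↔ ∀ q ∈ cubesUpTo M d N, r q = true := by
  constructor
  · rintro h ⟨t, j⟩ hq
    obtain ⟨⟨ht, hj⟩, htN⟩ := mem_cubesUpTo.1 hq
    obtain ⟨u, rfl⟩ : ∃ u, N = t + u := ⟨N - t, by omega⟩
    have hkept := kept_ancestor (h _ (descendant_mem_box hj (zero_mem_box hM u)))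
    obtain ⟨t, rfl⟩ : ∃ t', t = t' + 1 := ⟨t - 1, by omega⟩
    have hdesc : (fun i => descendant M j u 0 i / M ^ u) = j :=
      funext (descendant_div (zero_mem_box hM u))
    exact (hdesc ▸ hkept).2
  · intro h
    induction N with
    | zero => exact fun _ _ => trivial
    | succ N ih =>
      refine fun k hk => ⟨ih (fun q hq => h q ?_) _ (div_mem_box hk), h _ ?_⟩
      · obtain ⟨hvalid, hlevel⟩ := mem_cubesUpTo.1 hq
        exact mem_cubesUpTo.2 ⟨hvalid, by omega⟩
      · exact mem_cubesUpTo.2 ⟨⟨by omega, hk⟩, le_rfl⟩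

theorem Zperc_eq_iff (r : Idx d → Bool) (N : ℕ) :
    Zperc M d r N = M ^ (d * N) ↔ ∀ k ∈ box M d N, survivingPerc M d r N k := by
  classical
  have : {k : Fin d → ℕ | (∀ i, k i < M ^ N) ∧ survivingPerc M d r N k} =
      ↑((box M d N).filter (survivingPerc M d r N)) := by
    ext k; simp
  rw [Zperc, this, Set.ncard_coe_finset, ← card_box, Finset.card_filter_eq_iff]

theorem Zperc_eq_iff_forall_alive (hM : 0 < M) (r : Idx d → Bool) (N : ℕ) :
    Zperc M d r N = M ^ (d * N) ↔
      (∀ q ∈ cubesUpTo M d N, r q = true) ∧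
        ∀ k ∈ box M d N, alive M d (r ∘ shiftIdx M N k) := by
  rw [Zperc_eq_iff, ← forall_kept_iff hM, ← forall₂_and]
  exact forall₂_congr fun k hk => survivingPerc_iff hM hk

theorem alive_of_Zperc_eq (hM : 0 < M) {r : Idx d → Bool} {N : ℕ}
    (h : Zperc M d r N = M ^ (d * N)) : alive M d r :=
  alive_of_survivingPerc ((Zperc_eq_iff r N).1 h 0 (zero_mem_box hM N))

theorem mCube_succ_subset (hM : 0 < M) (n : ℕ) (k : Fin d → ℕ) :
    mCube d M (n + 1) k ⊆ mCube d M n (fun i => k i / M) := by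
  have hM' : (0 : ℝ) < M := by exact_mod_cast hM
  intro x hx i
  obtain ⟨hlo, hhi⟩ := hx i
  have hdiv_le : ((k i / M : ℕ) : ℝ) * M ≤ k i := by
    exact_mod_cast Nat.div_mul_le_self (k i) M
  have hlt_succ : (k i : ℝ) + 1 ≤ ((k i / M : ℕ) + 1 : ℝ) * M := by
    exact_mod_cast (Nat.lt_div_mul_add hM).trans_eq (Nat.succ_mul _ _).symm
  rw [pow_succ', ← div_div] at hlo hhi
  constructor
  · refine le_trans (div_le_div_of_nonneg_right ?_ (by positivity)) hlo
    rwa [le_div_iff₀ hM']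
  · refine hhi.trans (div_le_div_of_nonneg_right ?_ (by positivity))
    rwa [div_le_iff₀ hM']

theorem isCompact_mCube (n : ℕ) (k : Fin d → ℕ) : IsCompact (mCube d M n k) := by
  convert (EuclideanSpace.equiv (Fin d) ℝ).toHomeomorph.isCompact_preimage.2
    (isCompact_univ_pi fun i => isCompact_Icc (a := (k i : ℝ) / (M : ℝ) ^ n)
      (b := ((k i : ℝ) + 1) / (M : ℝ) ^ n)) using 1
  ext x
  simp only [mCube, Set.mem_ofPred_eq, Set.mem_preimage, Set.mem_univ_pi, Set.mem_Icc]
  rfl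

theorem mCube_nonempty (hM : 0 < M) (n : ℕ) (k : Fin d → ℕ) : (mCube d M n k).Nonempty := by
  refine ⟨WithLp.toLp 2 fun i => (k i : ℝ) / (M : ℝ) ^ n, fun i => ⟨le_rfl, ?_⟩⟩
  exact div_le_div_of_nonneg_right (by linarith) (by positivity)

theorem percLevel_succ_subset (hM : 0 < M) (n : ℕ) (r : Idx d → Bool) :
    percLevel d M (n + 1) r ⊆ percLevel d M n r := by
  simp only [percLevel, Set.iUnion_subset_iff]
  rintro k ⟨hk, hkept⟩
  exact (mCube_succ_subset hM n k).trans <|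
    Set.subset_biUnion_of_mem (u := mCube d M n)
      ⟨mem_box.1 (div_mem_box (mem_box.2 hk)), hkept.1⟩

theorem isCompact_percLevel (n : ℕ) (r : Idx d → Bool) : IsCompact (percLevel d M n r) :=
  ((box M d n).finite_toSet.subset fun _ hk => mem_box.2 hk.1).isCompact_biUnion
    fun k _ => isCompact_mCube n k

theorem percLevel_nonempty_iff (hM : 0 < M) (n : ℕ) (r : Idx d → Bool) :
    (percLevel d M n r).Nonempty ↔ ∃ k ∈ box M d n, kept M d r n k := by
  simp only [percLevel, Set.nonempty_iUnion, mem_box]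
  exact ⟨fun ⟨k, ⟨hk, hkept⟩, _⟩ => ⟨k, hk, hkept⟩,
    fun ⟨k, hk, hkept⟩ => ⟨k, ⟨hk, hkept⟩, mCube_nonempty hM n k⟩⟩

theorem percLimit_ne_empty_iff (hM : 0 < M) (r : Idx d → Bool) :
    percLimit d M r ≠ ∅ ↔ alive M d r := by
  rw [← Set.nonempty_iff_ne_empty, alive]
  simp_rw [← percLevel_nonempty_iff hM]
  refine ⟨fun ⟨x, hx⟩ n => ⟨x, Set.mem_iInter.1 hx n⟩, fun h => ?_⟩
  exact IsCompact.nonempty_iInter_of_sequence_nonempty_isCompact_isClosed _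
    (fun n => percLevel_succ_subset hM n r) h (isCompact_percLevel 0 r)
    fun n => (isCompact_percLevel n r).isClosed

open Classical in
/-- Only the retention variables at valid indices have a prescribed law, so events are read off
configurations on `validIdx M d`, extended by `false`. -/
def extendCfg (M d : ℕ) (g : validIdx M d → Bool) : Idx d → Bool :=
  fun q => if h : q ∈ validIdx M d then g ⟨q, h⟩ else false

theorem measurable_extendCfg (M d : ℕ) : Measurable (extendCfg M d) := by
  refine measurable_pi_lambda _ fun q => ?_
  unfold extendCfg
  split_ifs
  · exact measurable_pi_apply _
  · exact measurable_const

theorem alive_extendCfg_iff (r : Idx d → Bool) :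
    alive M d (extendCfg M d fun q : validIdx M d => r q) ↔ alive M d r :=
  alive_congr fun q hq => by simp [extendCfg, hq]

theorem measurableSet_kept (n : ℕ) (k : Fin d → ℕ) :
    MeasurableSet {r : Idx d → Bool | kept M d r n k} := by
  induction n generalizing k with
  | zero => exact MeasurableSet.univ
  | succ n ih =>
    exact (ih _).inter (measurableSet_singleton true |>.preimage (measurable_pi_apply (n + 1, k)))

theorem measurableSet_alive (M d : ℕ) : MeasurableSet {r : Idx d → Bool | alive M d r} := by
  simp only [alive, Set.ofPred_forall, Set.ofPred_exists]
  exact MeasurableSet.iInter fun n => MeasurableSet.iUnion fun k =>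
    (MeasurableSet.const _).inter (measurableSet_kept n k)

/-- A cube of level at most `N` is its own block; a deeper cube lies in the block of its
level-`N` ancestor. -/
theorem pairwiseDisjoint_blocks (N : ℕ) :
    ((cubesUpTo M d N).disjSum (box M d N) : Set (Idx d ⊕ (Fin d → ℕ))).PairwiseDisjoint
      (Sum.elim (fun q => {q}) fun k => shiftIdx M N k '' validIdx M d) := by
  classical
  let ancestor : Idx d → Idx d ⊕ (Fin d → ℕ) := fun q =>
    if q.1 ≤ N then .inl q else .inr fun i => q.2 i / M ^ (q.1 - N)
  refine (Set.pairwiseDisjoint_fiber ancestor _).mono_on ?_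
  rintro (q | k) hx
  · have hq : q.1 ≤ N := (mem_cubesUpTo.1 (Finset.inl_mem_disjSum.1 hx)).2
    simp [ancestor, hq]
  · rintro _ ⟨q, hq, rfl⟩
    have hlevel : ¬ N + q.1 ≤ N := by have := hq.1; omega
    simp only [ancestor, shiftIdx, hlevel, if_false, Nat.add_sub_cancel_left,
      Set.mem_preimage, Set.mem_singleton_iff, Sum.inr.injEq]
    exact funext (descendant_div hq.2)

section Events

variable {Ω : Type*} {mΩ : MeasurableSpace Ω} {P : Measure Ω} [IsProbabilityMeasure P]
  {retain : Idx d → Ω → Bool}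

theorem setOf_alive_eq_preimage (X : Idx d → Ω → Bool) :
    {ω | alive M d fun q => X q ω} =
      (fun ω (q : validIdx M d) => X q ω) ⁻¹' (extendCfg M d ⁻¹' {r | alive M d r}) := by
  ext ω
  exact (alive_extendCfg_iff _).symm

theorem measurableSet_setOf_alive (hmeas : ∀ q, Measurable (retain q)) :
    MeasurableSet {ω | alive M d fun q => retain q ω} := by
  rw [setOf_alive_eq_preimage]
  exact (measurable_extendCfg M d (measurableSet_alive M d)).preimage
    (measurable_pi_lambda _ fun q => hmeas _)

theorem measure_alive_comp_shiftIdx (hmeas : ∀ q, Measurable (retain q))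
    (hindep : iIndepFun retain P) {a : ℝ≥0∞}
    (hbern : ∀ q ∈ validIdx M d, P {ω | retain q ω = true} = a) {N : ℕ} {k : Fin d → ℕ}
    (hk : k ∈ box M d N) :
    P {ω | alive M d fun q => retain (shiftIdx M N k q) ω} =
      P {ω | alive M d fun q => retain q ω} := by
  have hS := measurable_extendCfg M d (measurableSet_alive M d)
  have hshift : iIndepFun (fun q : validIdx M d => retain (shiftIdx M N k q)) P :=
    hindep.precomp ((shiftIdx_injective M N k).comp Subtype.val_injective)
  have hvalid : iIndepFun (fun q : validIdx M d => retain q) P :=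
    hindep.precomp Subtype.val_injective
  rw [setOf_alive_eq_preimage, setOf_alive_eq_preimage retain,
    ← Measure.map_apply (measurable_pi_lambda _ fun q => hmeas _) hS,
    ← Measure.map_apply (measurable_pi_lambda _ fun q => hmeas _) hS,
    map_fun_eq_of_iIndepFun (fun q => hmeas _) (fun q => hmeas _) hshift hvalid
      fun q => (hbern _ (shiftIdx_mem_validIdx hk q.2)).trans (hbern q q.2).symm]

theorem measure_Zperc_eq (hM : 0 < M) (hmeas : ∀ q, Measurable (retain q))
    (hindep : iIndepFun retain P) {a : ℝ≥0∞}
    (hbern : ∀ q ∈ validIdx M d, P {ω | retain q ω = true} = a) (N : ℕ) :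
    P {ω | Zperc M d (fun q => retain q ω) N = M ^ (d * N)} =
      a ^ (cubesUpTo M d N).card * P {ω | alive M d fun q => retain q ω} ^ M ^ (d * N) := by
  let E : Idx d ⊕ (Fin d → ℕ) → Set Ω := Sum.elim (fun q => {ω | retain q ω = true})
    fun k => {ω | alive M d fun q => retain (shiftIdx M N k q) ω}
  have hA : {ω | Zperc M d (fun q => retain q ω) N = M ^ (d * N)} =
      ⋂ x ∈ (cubesUpTo M d N).disjSum (box M d N), E x := by
    ext ω
    simp [Zperc_eq_iff_forall_alive hM, E, Function.comp_def]
  have hE : ∀ x ∈ (cubesUpTo M d N).disjSum (box M d N),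
      MeasurableSet[⨆ q ∈ Sum.elim (fun q => {q}) (fun k => shiftIdx M N k '' validIdx M d) x,
        MeasurableSpace.comap (retain q) inferInstance] (E x) := by
    rintro (q | k) -
    · exact measurable_biSup_comap (X := retain) (Set.mem_singleton q)
        (measurableSet_singleton true)
    · have h := measurableSet_biSup_comap_preimage (X := retain)
        (J := shiftIdx M N k '' validIdx M d) (g := fun q : validIdx M d => shiftIdx M N k q)
        (fun q => ⟨q, q.2, rfl⟩)
        (measurable_extendCfg M d (measurableSet_alive M d))
      rwa [← setOf_alive_eq_preimage fun q => retain (shiftIdx M N k q)] at h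
  rw [hA, iIndep.measure_biInter_eq_prod (fun q => (hmeas q).comap_le)
    ((iIndepFun_iff_iIndep _ _ _).1 hindep) (pairwiseDisjoint_blocks N) hE, Finset.prod_disjSum]
  simp only [E, Sum.elim_inl, Sum.elim_inr]
  rw [Finset.prod_congr rfl fun q hq => hbern q (mem_cubesUpTo.1 hq).1,
    Finset.prod_congr rfl fun k hk => measure_alive_comp_shiftIdx hmeas hindep hbern hk,
    Finset.prod_const, Finset.prod_const, card_box]

end Events

theorem pow_card_cubesUpTo {p : ℝ} (hp : 0 ≤ p) (hMd : 1 < M ^ d) (N : ℕ) :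
    p ^ (cubesUpTo M d N).card =
      (p ^ ((M : ℝ) ^ d / ((M : ℝ) ^ d - 1))) ^ (M ^ (d * N) - 1) := by
  set x : ℝ := (M : ℝ) ^ d with hxdef
  have hx : 1 < x := by rw [hxdef]; exact_mod_cast hMd
  have hsum : ∑ t ∈ Finset.range N, x ^ (t + 1) = x * ∑ t ∈ Finset.range N, x ^ t := by
    simp_rw [Finset.mul_sum, pow_succ']
  have hcard : ((cubesUpTo M d N).card : ℝ) = x / (x - 1) * ((M ^ (d * N) - 1 : ℕ) : ℝ) := by
    rw [card_cubesUpTo, Nat.cast_sub (pow_mul M d N ▸ Nat.one_le_pow N (M ^ d) (by omega))]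
    push_cast
    simp_rw [pow_mul, ← hxdef]
    rw [hsum, geom_sum_eq hx.ne']
    ring
  rw [← Real.rpow_natCast, hcard, Real.rpow_mul hp, Real.rpow_natCast]

theorem inv_mul_ofReal_pow_mul_pow {θ : ℝ≥0∞} (hθ : θ ≠ ⊤) (y : ℝ) {n : ℕ}
    (hn : 2 ≤ n) :
    θ⁻¹ * (ENNReal.ofReal (y ^ (n - 1)) * θ ^ n) =
      ENNReal.ofReal ((θ.toReal * y) ^ (n - 1)) := by
  obtain ⟨m, rfl⟩ : ∃ m, n = m + 2 := ⟨n - 2, by omega⟩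
  rcases eq_or_ne θ 0 with rfl | hθ0
  · simp
  · rw [show m + 2 - 1 = m + 1 by omega, mul_pow, ENNReal.ofReal_mul (by positivity),
      ENNReal.ofReal_pow ENNReal.toReal_nonneg, ENNReal.ofReal_toReal hθ, pow_succ' θ (m + 1),
      mul_left_comm, ENNReal.inv_mul_cancel_left hθ0 hθ, mul_comm]

end FractalPercolation

open FractalPercolation

theorem stmt12_general {Ω : Type} [MeasurableSpace Ω] (d M : ℕ) (p : ℝ) (hd : 1 ≤ d) (hM : 2 ≤ M)
    (hp₀ : (M : ℝ) ^ (-(d : ℤ)) < p)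
    (P : Measure Ω) [IsProbabilityMeasure P]
    (retain : ℕ × (Fin d → ℕ) → Ω → Bool)
    (hmeas : ∀ q, Measurable (retain q))
    (hindep : iIndepFun retain P)
    (hbern : ∀ n k, (∀ i, k i < M ^ (n + 1)) →
      P {ω | retain (n + 1, k) ω = true} = ENNReal.ofReal p)
    (N : ℕ) (hN : 1 ≤ N) :
    P[|{ω | percLimit d M (fun q => retain q ω) ≠ ∅}]
        {ω | Zperc M d (fun q => retain q ω) N = M ^ (d * N)} =
      ENNReal.ofReal
        (((1 - (P {ω | percLimit d M (fun q => retain q ω) = ∅}).toReal) *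
            p ^ ((M : ℝ) ^ d / ((M : ℝ) ^ d - 1))) ^ (M ^ (d * N) - 1)) := by
  have hM0 : 0 < M := by omega
  have hp : 0 < p := lt_trans (by positivity) hp₀
  have hbern_valid : ∀ q ∈ validIdx M d, P {ω | retain q ω = true} = ENNReal.ofReal p := by
    rintro ⟨_ | n, k⟩ ⟨hn, hk⟩
    · omega
    · exact hbern n k (mem_box.1 hk)
  set survives := {ω | alive M d fun q => retain q ω}
  have hne : {ω | percLimit d M (fun q => retain q ω) ≠ ∅} = survives :=
    Set.ext fun ω => percLimit_ne_empty_iff hM0 _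
  have hempty : {ω | percLimit d M (fun q => retain q ω) = ∅} = survivesᶜ := by
    rw [← hne]; ext; simp
  have hsurvives : MeasurableSet survives := measurableSet_setOf_alive hmeas
  have hfull : {ω | Zperc M d (fun q => retain q ω) N = M ^ (d * N)} ⊆ survives :=
    fun _ => alive_of_Zperc_eq hM0
  have hn : 2 ≤ M ^ (d * N) := hM.trans (Nat.le_self_pow (by positivity) M)
  rw [hne, cond_apply hsurvives, Set.inter_eq_right.2 hfull,
    measure_Zperc_eq hM0 hmeas hindep hbern_valid, ← ENNReal.ofReal_pow hp.le,
    pow_card_cubesUpTo hp.le (Nat.one_lt_pow (by omega) hM),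
    inv_mul_ofReal_pow_mul_pow (measure_ne_top _ _) _ hn, hempty]
  simp only [← measureReal_def, probReal_compl_eq_one_sub hsurvives, sub_sub_cancel]

/-- For fractal percolation with `p > M^(-d)` and any `N ≥ 1`,
`P(Z_N = M^(dN) | E ≠ ∅) = ((1-q) p^(M^d/(M^d-1)))^(M^(dN)-1)` where `q = P(E = ∅)`. -/
theorem stmt12 {Ω : Type} [MeasurableSpace Ω] (d M : ℕ) (p : ℝ) (hd : 1 ≤ d) (hM : 2 ≤ M)
    (hp₀ : (M : ℝ) ^ (-(d : ℤ)) < p) (hp₁ : p < 1)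
    (P : Measure Ω) [IsProbabilityMeasure P]
    (retain : ℕ × (Fin d → ℕ) → Ω → Bool)
    (hmeas : ∀ q, Measurable (retain q))
    (hindep : iIndepFun retain P)
    (hbern : ∀ n k, (∀ i, k i < M ^ (n + 1)) →
      P {ω | retain (n + 1, k) ω = true} = ENNReal.ofReal p)
    (N : ℕ) (hN : 1 ≤ N) :
    P[|{ω | percLimit d M (fun q => retain q ω) ≠ ∅}]
        {ω | Zperc M d (fun q => retain q ω) N = M ^ (d * N)} =
      ENNReal.ofReal
        (((1 - (P {ω | percLimit d M (fun q => retain q ω) = ∅}).toReal) *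
            p ^ ((M : ℝ) ^ d / ((M : ℝ) ^ d - 1))) ^ (M ^ (d * N) - 1)) :=
  stmt12_general d M p hd hM hp₀ P retain hmeas hindep hbern N hN
end
end

section
/- Conical density lemma: For all integers d ≥ 1 and M ≥ 2 there exists N_0 ∈ ℕ with the following property: for every collection of (M^{d−1}+1)^{N_0} pairwise distinct cubes Q_1, …, Q_{(M^{d−1}+1)^{N_0}} from Q_{N_0}, there exists an index i such that for every x ∈ Q_i and every unit vector θ ∈ S^{d−1} there exists an index j with dist(Q_j, Q_i) > M^{-N_0} and Q_j ⊆ H(x,θ,4/5). -/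
open MeasureTheory ProbabilityTheory Filter Metric Set
open scoped ENNReal ProbabilityTheory RealInnerProductSpace

noncomputable section

/-- The open cone at `x` in direction `θ` with parameter `α`:
`H(x,θ,α) = {y : (y-x)·θ > α‖y-x‖}`. -/
def cone (d : ℕ) (x θ : EuclideanSpace ℝ (Fin d)) (α : ℝ) :
    Set (EuclideanSpace ℝ (Fin d)) :=
  {y | α * ‖y - x‖ < ⟪y - x, θ⟫}

/-- The distance between two sets: `dist(A,B) = inf {dist x y : x ∈ A, y ∈ B}`. -/
def setDist {d : ℕ} (A B : Set (EuclideanSpace ℝ (Fin d))) : ℝ :=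
  sInf (Set.image2 dist A B)

/-!
Suppose every cube `Q_i` is bad, as witnessed by a point `x_i ∈ Q_i` and a direction `θ_i`. A cube
whose centre is far from that of `Q_i` and lies in the narrower cone of aperture `9/10` around
`θ_i` would be a good partner, so no such centre exists. Round each `θ_i` to a point `τ` of a
finite `1/20`-net of the sphere. Within one fibre of this rounding, the difference of two far
centres makes an angle bounded away from zero with `τ`; hence centres falling into the same cell
of the grid of mesh `M^{-N}` on the hyperplane `τᗮ` are close, and each cell carries at most
`(40d)^d` cubes. A fibre thus has `O(M^{(d-1)N})` cubes, fewer than `(M^{d-1}+1)^N / #net` once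
`N` is large.
-/

section OrthogonalGrid

variable {E : Type*} [NormedAddCommGroup E] [InnerProductSpace ℝ E] [FiniteDimensional ℝ E]

lemma finrank_orthogonal_span_singleton_add_one {τ : E} (hτ : τ ≠ 0) :
    Module.finrank ℝ (ℝ ∙ τ)ᗮ + 1 = Module.finrank ℝ E := by
  rw [← finrank_span_singleton (K := ℝ) hτ, add_comm, Submodule.finrank_add_finrank_orthogonal]

lemma norm_sq_eq_inner_sq_add_sum_inner_sq {τ : E} (hτ : ‖τ‖ = 1) (v : E) :
    ‖v‖ ^ 2 = ⟪v, τ⟫ ^ 2 +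
      ∑ m, ⟪v, (stdOrthonormalBasis ℝ (ℝ ∙ τ)ᗮ m : E)⟫ ^ 2 := by
  rw [Submodule.norm_sq_eq_add_norm_sq_projection v (ℝ ∙ τ),
    ← (stdOrthonormalBasis ℝ (ℝ ∙ τ)ᗮ).sum_sq_inner_right]
  congr 1
  · rw [Submodule.coe_norm, ← Submodule.starProjection_apply,
      Submodule.starProjection_unit_singleton ℝ hτ,
      norm_smul, hτ, mul_one, Real.norm_eq_abs, sq_abs, real_inner_comm]
  · simp_rw [Submodule.inner_orthogonalProjectionOnto_eq_of_mem_left, real_inner_comm]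

/-- The cell containing `x` of the grid of mesh `s` on `τᗮ`, in the coordinates of an orthonormal
basis of `τᗮ`. -/
def orthCell (τ : E) (s : ℝ) (x : E) : Fin (Module.finrank ℝ (ℝ ∙ τ)ᗮ) → ℤ :=
  fun m => ⌊⟪x, (stdOrthonormalBasis ℝ (ℝ ∙ τ)ᗮ m : E)⟫ / s⌋

lemma norm_sub_sq_le_of_orthCell_eq {τ : E} (hτ : ‖τ‖ = 1) {s : ℝ} (hs : 0 < s) {x y : E}
    (h : orthCell τ s x = orthCell τ s y) :
    ‖x - y‖ ^ 2 ≤ ⟪x - y, τ⟫ ^ 2 + Module.finrank ℝ (ℝ ∙ τ)ᗮ * s ^ 2 := by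
  rw [norm_sq_eq_inner_sq_add_sum_inner_sq hτ]
  gcongr
  calc ∑ m, ⟪x - y, (stdOrthonormalBasis ℝ (ℝ ∙ τ)ᗮ m : E)⟫ ^ 2
      ≤ ∑ _m : Fin (Module.finrank ℝ (ℝ ∙ τ)ᗮ), s ^ 2 := by
        refine Finset.sum_le_sum fun m _ => ?_
        have hm := Int.abs_sub_lt_one_of_floor_eq_floor (congrFun h m)
        rw [← sub_div, abs_div, abs_of_pos hs, div_lt_one hs, ← inner_sub_left] at hm
        exact sq_le_sq' (abs_lt.mp hm).1.le (abs_lt.mp hm).2.le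
    _ = _ := by simp

lemma orthCell_mem_Icc {τ : E} {s : ℝ} (hs : 0 < s) {B : ℕ} {x : E} (hx : ‖x‖ ≤ B * s)
    (m : Fin (Module.finrank ℝ (ℝ ∙ τ)ᗮ)) : orthCell τ s x m ∈ Finset.Icc (-(B : ℤ)) B := by
  have hb : |⟪x, (stdOrthonormalBasis ℝ (ℝ ∙ τ)ᗮ m : E)⟫| ≤ B * s := by
    refine (abs_real_inner_le_norm _ _).trans ?_
    have : ‖(stdOrthonormalBasis ℝ (ℝ ∙ τ)ᗮ m : E)‖ = 1 :=
      (stdOrthonormalBasis ℝ (ℝ ∙ τ)ᗮ).orthonormal.1 m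
    rwa [this, mul_one]
  rw [abs_le] at hb
  rw [Finset.mem_Icc, orthCell, Int.le_floor, Int.floor_le_iff, le_div_iff₀ hs, div_lt_iff₀ hs]
  push_cast
  constructor <;> linarith [hb.1, hb.2]

end OrthogonalGrid

lemma exists_finset_unit_net {E : Type*} [NormedAddCommGroup E] [ProperSpace E] {ε : ℝ}
    (hε : 0 < ε) : ∃ Θ : Finset E, (∀ τ ∈ Θ, ‖τ‖ = 1) ∧
      ∀ θ : E, ‖θ‖ = 1 → ∃ τ ∈ Θ, ‖θ - τ‖ < ε := by
  obtain ⟨t, hts, ht, hcover⟩ := finite_cover_balls_of_compact (isCompact_sphere (0 : E) 1) hε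
  refine ⟨ht.toFinset, fun τ hτ => by simpa using hts (ht.mem_toFinset.mp hτ), fun θ hθ => ?_⟩
  obtain ⟨τ, hτ, hθτ⟩ := mem_iUnion₂.mp (hcover (mem_sphere_zero_iff_norm.mpr hθ))
  exact ⟨τ, ht.mem_toFinset.mpr hτ, mem_ball_iff_norm.mp hθτ⟩

lemma inner_lt_add_mul_of_norm_sub_le {E : Type*} [NormedAddCommGroup E] [InnerProductSpace ℝ E]
    {v θ τ : E} {α ε : ℝ} (hθ : ⟪v, θ⟫ < α * ‖v‖) (hτ : ‖θ - τ‖ ≤ ε) :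
    ⟪v, τ⟫ < (α + ε) * ‖v‖ :=
  calc ⟪v, τ⟫ = ⟪v, θ⟫ - ⟪v, θ - τ⟫ := by rw [inner_sub_right, sub_sub_cancel]
    _ ≤ ⟪v, θ⟫ + ‖v‖ * ‖θ - τ‖ := by linarith [neg_le_of_abs_le (abs_real_inner_le_norm v (θ - τ))]
    _ ≤ ⟪v, θ⟫ + ‖v‖ * ε := by gcongr
    _ < (α + ε) * ‖v‖ := by linarith

lemma eventually_mul_pow_lt_add_one_pow (C : ℕ) {K : ℕ} (hK : 0 < K) :
    ∀ᶠ N in atTop, C * K ^ N < (K + 1) ^ N := by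
  have hratio : (1 : ℝ) < (K + 1) / K := by
    rw [one_lt_div (by positivity)]
    linarith
  filter_upwards [(tendsto_pow_atTop_atTop_of_one_lt hratio).eventually_gt_atTop (C : ℝ)]
    with N hN
  rw [div_pow, lt_div_iff₀ (by positivity)] at hN
  exact_mod_cast hN

section ConeGeometry

variable {d : ℕ}

lemma sub_le_setDist {A B : Set (EuclideanSpace ℝ (Fin d))} (hA : A.Nonempty) (hB : B.Nonempty)
    {a b : EuclideanSpace ℝ (Fin d)} {r : ℝ} (hAr : ∀ y ∈ A, dist y a ≤ r)
    (hBr : ∀ z ∈ B, dist z b ≤ r) : dist a b - 2 * r ≤ setDist A B := by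
  refine le_csInf (hA.image2 hB) ?_
  rintro _ ⟨y, hy, z, hz, rfl⟩
  linarith [dist_triangle4 a y z b, hAr y hy, hBr z hz, dist_comm a y]

lemma subset_cone_of_inner_ge {a b x θ : EuclideanSpace ℝ (Fin d)}
    {B : Set (EuclideanSpace ℝ (Fin d))} {r : ℝ} (hθ : ‖θ‖ = 1) (hx : dist x a ≤ r) (hBr : ∀ z ∈ B, dist z b ≤ r)
    (hfar : 36 * r < ‖b - a‖) (hin : 9 / 10 * ‖b - a‖ ≤ ⟪b - a, θ⟫) : B ⊆ cone d x θ (4 / 5) := by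
  intro y hy
  set e := (y - b) - (x - a) with he_def
  have hyx : y - x = (b - a) + e := by rw [he_def]; abel
  have he : ‖e‖ ≤ 2 * r := by
    linarith [norm_sub_le (y - b) (x - a), hBr y hy, dist_eq_norm y b, dist_eq_norm x a]
  have heθ : -‖e‖ ≤ ⟪e, θ⟫ := by
    simpa [hθ] using neg_le_of_abs_le (abs_real_inner_le_norm e θ)
  change 4 / 5 * ‖y - x‖ < ⟪y - x, θ⟫
  rw [hyx, inner_add_left]
  -- `4/5 (L + 2r) < 9/10 L - 2r` holds exactly when `36 r < L`.
  linarith [norm_add_le (b - a) e]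

end ConeGeometry

section MAdicCube

variable {d M n : ℕ}

def mCubeCenter (d M n : ℕ) (k : Fin d → ℕ) : EuclideanSpace ℝ (Fin d) :=
  WithLp.toLp 2 fun u => ((k u : ℝ) + 1 / 2) / (M : ℝ) ^ n

lemma mCubeCenter_mem (hM : 0 < M) (k : Fin d → ℕ) : mCubeCenter d M n k ∈ mCube d M n k := by
  intro u
  simp only [mCubeCenter, PiLp.toLp_apply]
  constructor <;> gcongr <;> norm_num

lemma mCubeCenter_sub_apply (k k' : Fin d → ℕ) (u : Fin d) :
    (mCubeCenter d M n k - mCubeCenter d M n k') u = ((k u : ℝ) - k' u) * ((M : ℝ) ^ n)⁻¹ := by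
  simp only [mCubeCenter, PiLp.sub_apply]
  ring

lemma norm_le_of_forall_abs_apply_le {v : EuclideanSpace ℝ (Fin d)} {a : ℝ} (ha : 0 ≤ a)
    (h : ∀ u, |v u| ≤ a) : ‖v‖ ≤ d * a := by
  refine (pow_le_pow_iff_left₀ (norm_nonneg v) (by positivity) two_ne_zero).mp ?_
  have hd : (d : ℝ) ≤ d ^ 2 := by exact_mod_cast Nat.le_self_pow two_ne_zero d
  calc ‖v‖ ^ 2 = ∑ u, ‖v u‖ ^ 2 := EuclideanSpace.norm_sq_eq v
    _ ≤ ∑ _u : Fin d, a ^ 2 := by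
      gcongr with u
      rw [Real.norm_eq_abs]
      exact h u
    _ = d * a ^ 2 := by simp
    _ ≤ (d * a) ^ 2 := by rw [mul_pow]; gcongr

lemma dist_le_of_mem_mCube {k : Fin d → ℕ} {x y : EuclideanSpace ℝ (Fin d)}
    (hx : x ∈ mCube d M n k) (hy : y ∈ mCube d M n k) : dist x y ≤ d * ((M : ℝ) ^ n)⁻¹ := by
  rw [dist_eq_norm]
  refine norm_le_of_forall_abs_apply_le (by positivity) fun u => ?_
  have hwidth : ((k u : ℝ) + 1) / (M : ℝ) ^ n - k u / (M : ℝ) ^ n = ((M : ℝ) ^ n)⁻¹ := by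
    rw [div_sub_div_same, add_sub_cancel_left, one_div]
  rw [PiLp.sub_apply, abs_le]
  constructor <;> linarith [hx u, hy u]

lemma norm_mCubeCenter_le (hM : 0 < M) {k : Fin d → ℕ} (hk : ∀ u, k u < M ^ n) :
    ‖mCubeCenter d M n k‖ ≤ d := by
  simpa using norm_le_of_forall_abs_apply_le zero_le_one fun u => by
    have hku : (k u : ℝ) + 1 ≤ (M : ℝ) ^ n := by exact_mod_cast hk u
    rw [mCubeCenter, PiLp.toLp_apply, abs_of_nonneg (by positivity), div_le_one (by positivity)]
    linarith

lemma eq_of_norm_mCubeCenter_sub_lt (hM : 0 < M) {k k' : Fin d → ℕ} {L : ℕ}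
    (h : ‖mCubeCenter d M n k - mCubeCenter d M n k'‖ < L * ((M : ℝ) ^ n)⁻¹)
    (hmod : ∀ u, k u % L = k' u % L) : k = k' := by
  funext u
  refine Nat.ModEq.eq_of_abs_lt (hmod u) ?_
  have hu := (PiLp.norm_apply_le _ u).trans_lt h
  rw [mCubeCenter_sub_apply, Real.norm_eq_abs, abs_mul,
    abs_of_pos (a := ((M : ℝ) ^ n)⁻¹) (by positivity), mul_lt_mul_iff_left₀ (by positivity),
    abs_sub_comm] at hu
  exact_mod_cast hu

lemma lt_setDist_and_subset_cone (hd : 1 ≤ d) (hM : 0 < M) {k k' : Fin d → ℕ}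
    {x θ : EuclideanSpace ℝ (Fin d)} (hx : x ∈ mCube d M n k) (hθ : ‖θ‖ = 1)
    (hfar : 40 * d * ((M : ℝ) ^ n)⁻¹ ≤ ‖mCubeCenter d M n k' - mCubeCenter d M n k‖)
    (hin : 9 / 10 * ‖mCubeCenter d M n k' - mCubeCenter d M n k‖ ≤
      ⟪mCubeCenter d M n k' - mCubeCenter d M n k, θ⟫) :
    ((M : ℝ) ^ n)⁻¹ < setDist (mCube d M n k') (mCube d M n k) ∧
      mCube d M n k' ⊆ cone d x θ (4 / 5) := by
  have hr : ((M : ℝ) ^ n)⁻¹ ≤ d * ((M : ℝ) ^ n)⁻¹ :=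
    le_mul_of_one_le_left (by positivity) (by exact_mod_cast hd)
  have hδ : 0 < ((M : ℝ) ^ n)⁻¹ := by positivity
  have hcenter {k : Fin d → ℕ} {y : EuclideanSpace ℝ (Fin d)} (hy : y ∈ mCube d M n k) :
      dist y (mCubeCenter d M n k) ≤ d * ((M : ℝ) ^ n)⁻¹ :=
    dist_le_of_mem_mCube hy (mCubeCenter_mem hM k)
  constructor
  · have := sub_le_setDist ⟨_, mCubeCenter_mem hM k'⟩ ⟨_, mCubeCenter_mem hM k⟩
      (fun _ => hcenter) (fun _ => hcenter)
    rw [dist_eq_norm] at this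
    linarith
  · exact subset_cone_of_inner_ge hθ (hcenter hx) (fun _ => hcenter) (by linarith) hin

end MAdicCube

section Counting

variable {ι : Type*} {d M n : ℕ}

lemma card_le_of_forall_far_abs_inner_lt (hM : 0 < M) {Q : ι → Fin d → ℕ} {P : Finset ι}
    (hQ : Set.InjOn Q P) (hQlt : ∀ i u, Q i u < M ^ n) {τ : EuclideanSpace ℝ (Fin d)}
    (hτ : ‖τ‖ = 1)
    (hcone : ∀ i ∈ P, ∀ j ∈ P,
      40 * d * ((M : ℝ) ^ n)⁻¹ ≤ ‖mCubeCenter d M n (Q j) - mCubeCenter d M n (Q i)‖ →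
      |⟪mCubeCenter d M n (Q j) - mCubeCenter d M n (Q i), τ⟫| <
        19 / 20 * ‖mCubeCenter d M n (Q j) - mCubeCenter d M n (Q i)‖) :
    P.card ≤ (3 * d * M ^ n) ^ (d - 1) * (40 * d) ^ d := by
  set δ : ℝ := ((M : ℝ) ^ n)⁻¹ with hδ_def
  set c := fun i => mCubeCenter d M n (Q i)
  have hδ : 0 < δ := by positivity
  have hrank : Module.finrank ℝ (ℝ ∙ τ)ᗮ + 1 = d := by
    rw [finrank_orthogonal_span_singleton_add_one (norm_ne_zero_iff.mp (hτ ▸ one_ne_zero)),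
      finrank_euclideanSpace_fin]
  have hclose : ∀ i ∈ P, ∀ j ∈ P, orthCell τ δ (c j) = orthCell τ δ (c i) →
      ‖c j - c i‖ < 40 * d * δ := by
    intro i hi j hj hcell
    by_contra! hfar
    -- Sharing a cell bounds the component of `c j - c i` along `τᗮ` by `√(d-1) δ`, while the
    -- cone condition makes that component a fixed fraction of `‖c j - c i‖ ≥ 40 d δ`.
    have hsplit := norm_sub_sq_le_of_orthCell_eq hτ hδ hcell
    have hacross := abs_lt.mp (hcone i hi j hj hfar)
    replace hacross := sq_lt_sq' hacross.1 hacross.2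
    have hlong := pow_le_pow_left₀ (by positivity) hfar 2
    have hrank' : (Module.finrank ℝ (ℝ ∙ τ)ᗮ : ℝ) + 1 = d := by exact_mod_cast hrank
    have hd : (1 : ℝ) ≤ d := by linarith [(Module.finrank ℝ (ℝ ∙ τ)ᗮ).cast_nonneg (α := ℝ)]
    nlinarith [mul_nonneg (sub_nonneg.mpr hd) (mul_nonneg (Nat.cast_nonneg d) (sq_nonneg δ))]
  have hcenter (i : ι) : ‖c i‖ ≤ ((d * M ^ n : ℕ) : ℝ) * δ := by
    rw [hδ_def, Nat.cast_mul, Nat.cast_pow, mul_assoc, mul_inv_cancel₀ (by positivity), mul_one]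
    exact norm_mCubeCenter_le hM (hQlt i)
  calc P.card
      ≤ ((Fintype.piFinset fun _ => Finset.Icc (-((d * M ^ n : ℕ) : ℤ)) (d * M ^ n : ℕ)) ×ˢ
          Fintype.piFinset fun _ : Fin d => Finset.range (40 * d)).card := by
        refine Finset.card_le_card_of_injOn
          (fun i => (orthCell τ δ (c i), fun u => Q i u % (40 * d))) (fun i _ => ?_)
          (fun i hi j hj hij => ?_)
        · simp only [Finset.coe_product, Set.mem_prod, Fintype.coe_piFinset, Set.mem_pi,
            Set.mem_univ, Finset.mem_coe, Finset.mem_range, forall_const]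
          exact ⟨orthCell_mem_Icc hδ (hcenter i), fun u => Nat.mod_lt _ (by omega)⟩
        · simp only [Prod.mk.injEq] at hij
          refine (hQ hj hi (eq_of_norm_mCubeCenter_sub_lt (n := n) hM (L := 40 * d) ?_
            fun u => (congrFun hij.2 u).symm)).symm
          push_cast
          exact hclose i hi j hj hij.1.symm
    _ = (2 * (d * M ^ n) + 1) ^ (d - 1) * (40 * d) ^ d := by
        simp only [Finset.card_product, Fintype.card_piFinset, Int.card_Icc, Finset.card_range,
          Finset.prod_const, Finset.card_univ, Fintype.card_fin]
        rw [show d - 1 = Module.finrank ℝ (ℝ ∙ τ)ᗮ by omega]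
        congr 2
        omega
    _ ≤ (3 * d * M ^ n) ^ (d - 1) * (40 * d) ^ d := by
        have : 0 < d * M ^ n := Nat.mul_pos (by omega) (by positivity)
        gcongr
        rw [mul_assoc 3]
        omega

lemma card_le_of_forall_far_inner_lt [Fintype ι] (hM : 0 < M) {Q : ι → Fin d → ℕ}
    (hQ : Function.Injective Q) (hQlt : ∀ i u, Q i u < M ^ n)
    {Θ : Finset (EuclideanSpace ℝ (Fin d))} (hΘ : ∀ τ ∈ Θ, ‖τ‖ = 1)
    (hnet : ∀ θ : EuclideanSpace ℝ (Fin d), ‖θ‖ = 1 → ∃ τ ∈ Θ, ‖θ - τ‖ < 1 / 20)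
    {θ : ι → EuclideanSpace ℝ (Fin d)} (hθ : ∀ i, ‖θ i‖ = 1)
    (hcone : ∀ i j,
      40 * d * ((M : ℝ) ^ n)⁻¹ ≤ ‖mCubeCenter d M n (Q j) - mCubeCenter d M n (Q i)‖ →
      ⟪mCubeCenter d M n (Q j) - mCubeCenter d M n (Q i), θ i⟫ <
        9 / 10 * ‖mCubeCenter d M n (Q j) - mCubeCenter d M n (Q i)‖) :
    Fintype.card ι ≤ Θ.card * ((3 * d * M ^ n) ^ (d - 1) * (40 * d) ^ d) := by
  classical
  choose τ hτΘ hτ using fun i => hnet (θ i) (hθ i)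
  have hconeτ (i j : ι)
      (hfar : 40 * d * ((M : ℝ) ^ n)⁻¹ ≤ ‖mCubeCenter d M n (Q j) - mCubeCenter d M n (Q i)‖) :
      ⟪mCubeCenter d M n (Q j) - mCubeCenter d M n (Q i), τ i⟫ <
        19 / 20 * ‖mCubeCenter d M n (Q j) - mCubeCenter d M n (Q i)‖ := by
    have := inner_lt_add_mul_of_norm_sub_le (hcone i j hfar) (hτ i).le
    norm_num at this ⊢
    exact this
  calc Fintype.card ι = ∑ t ∈ Θ, (Finset.univ.filter fun i => τ i = t).card := by
        rw [← Finset.card_univ]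
        exact Finset.card_eq_sum_card_fiberwise fun i _ => hτΘ i
    _ ≤ ∑ _t ∈ Θ, (3 * d * M ^ n) ^ (d - 1) * (40 * d) ^ d := by
        refine Finset.sum_le_sum fun t ht => card_le_of_forall_far_abs_inner_lt hM hQ.injOn hQlt
          (hΘ t ht) fun i hi j hj hfar => abs_lt.mpr ⟨?_, ?_⟩
        · rw [norm_sub_rev] at hfar
          have := hconeτ j i hfar
          rw [(Finset.mem_filter.mp hj).2, norm_sub_rev, ← neg_sub, inner_neg_left] at this
          linarith
        · simpa [(Finset.mem_filter.mp hi).2] using hconeτ i j hfar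
    _ = Θ.card * ((3 * d * M ^ n) ^ (d - 1) * (40 * d) ^ d) := by simp

end Counting

/-- **conical density lemma.** For all `d ≥ 1`, `M ≥ 2` there is `N₀ ∈ ℕ` such
that any collection of `(M^(d-1)+1)^N₀` pairwise distinct level-`N₀` cubes contains a cube
`Q_i` such that for every `x ∈ Q_i` and every unit vector `θ` there is a cube `Q_j` with
`dist(Q_j, Q_i) > M^(-N₀)` and `Q_j ⊆ H(x,θ,4/5)`. -/
theorem stmt13 (d M : ℕ) (hd : 1 ≤ d) (hM : 2 ≤ M) :
    ∃ N₀ : ℕ, 0 < N₀ ∧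
      ∀ Q : Fin ((M ^ (d - 1) + 1) ^ N₀) → (Fin d → ℕ),
        Function.Injective Q → (∀ j i, Q j i < M ^ N₀) →
        ∃ i, ∀ x ∈ mCube d M N₀ (Q i), ∀ θ : EuclideanSpace ℝ (Fin d), ‖θ‖ = 1 →
          ∃ j, (M : ℝ) ^ (-(N₀ : ℤ)) < setDist (mCube d M N₀ (Q j)) (mCube d M N₀ (Q i)) ∧
            mCube d M N₀ (Q j) ⊆ cone d x θ (4 / 5) := by
  have hM0 : 0 < M := by omega
  obtain ⟨Θ, hΘ, hnet⟩ :=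
    exists_finset_unit_net (E := EuclideanSpace ℝ (Fin d)) (ε := 1 / 20) (by norm_num)
  obtain ⟨N, hN, hN0⟩ := ((eventually_mul_pow_lt_add_one_pow
    (Θ.card * (3 * d) ^ (d - 1) * (40 * d) ^ d) (pow_pos hM0 (d - 1))).and
      (eventually_gt_atTop 0)).exists
  refine ⟨N, hN0, fun Q hQ hQlt => ?_⟩
  by_contra! hbad
  choose x hx θ hθ hbad using hbad
  have hcard := card_le_of_forall_far_inner_lt hM0 hQ hQlt hΘ hnet hθ fun i j hfar => by
    by_contra! hin
    obtain ⟨hdist, hsub⟩ := lt_setDist_and_subset_cone hd hM0 (hx i) (hθ i) hfar hin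
    exact hbad i j (by rw [zpow_neg, zpow_natCast]; exact hdist) hsub
  rw [Fintype.card_fin, mul_pow, ← pow_mul, mul_comm N, pow_mul] at hcard
  linarith
end
end

section
/- For all integers d ≥ 1, M ≥ 2 and N ≥ 1 there exists ε = ε(d,M,N) > 0 such that: for every x ∈ ℝ^d, every unit vector θ ∈ S^{d−1}, every r with 2√d·M^{-N} ≤ r < 2√d, and every point y on the ray {x + tθ : t ≥ 0} satisfying B(y,(1/2−ε)r) ⊆ B(x,r) \ {x}, one has H(x,θ,4/5) ∩ B(x,√d·M^{-N}) \ B(x,M^{-2N}) ⊆ B(y,(1/2−ε)r). -/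
open MeasureTheory ProbabilityTheory Filter Metric Set
open scoped ENNReal ProbabilityTheory RealInnerProductSpace

noncomputable section

set_option maxHeartbeats 1000000 in
lemma key14 (D c r t s p : ℝ) (hD : 1 ≤ D) (hc : 2 ≤ c)
    (hr1 : 2 * D * c⁻¹ ≤ r) (hr2 : r ≤ 2 * D)
    (htρ : (1/2 - 1/(100*D*c^2)) * r ≤ t)
    (htr : t + (1/2 - 1/(100*D*c^2)) * r ≤ r)
    (hs1 : (c^2)⁻¹ ≤ s) (hs2 : s ≤ D * c⁻¹)
    (hp : 4/5 * s ≤ p) :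
    s^2 - 2*t*p + t^2 ≤ ((1/2 - 1/(100*D*c^2)) * r)^2 := by
  have hc0 : (0:ℝ) < c := by linarith
  have hD0 : (0:ℝ) < D := by linarith
  set ε : ℝ := 1/(100*D*c^2) with hε
  have hε0 : 0 < ε := by positivity
  have hε400 : ε ≤ 1/400 := by
    rw [hε, div_le_div_iff₀ (by positivity) (by norm_num)]
    nlinarith
  have hr0 : (0:ℝ) < r := lt_of_lt_of_le (by positivity) hr1
  set ρ : ℝ := (1/2 - ε) * r with hρ
  have hρ0 : 0 ≤ ρ := by
    have : (0:ℝ) ≤ (1/2 - ε) := by linarith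
    positivity
  have hs0 : (0:ℝ) < s := lt_of_lt_of_le (by positivity) hs1
  have ht0 : 0 ≤ t := le_trans hρ0 htρ
  -- s ≥ 100 ε D, since 100 ε D = 1/c²
  have h100 : 100*ε*D = (c^2)⁻¹ := by
    rw [hε]; field_simp
  have h100' : 100*ε*D ≤ s := h100 ▸ hs1
  have h2eD : ε*r ≤ 2*ε*D := by nlinarith [mul_nonneg hε0.le (sub_nonneg.2 hr2)]
  have hεrs : ε*r ≤ s/50 := by linarith
  have hs2r : 2*s ≤ r := by
    have : 2*s ≤ 2*(D*c⁻¹) := by linarith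
    linarith [hr1]
  -- key endpoint-free bound: s² + 2εr² ≤ (8/5)ρs
  have h3 : s^2 + 2*ε*r^2 ≤ 8/5*ρ*s := by
    rw [hρ]
    nlinarith [mul_nonneg hs0.le (by linarith : (0:ℝ) ≤ r - 2*s),
      mul_le_mul_of_nonneg_left hεrs hr0.le,
      mul_le_mul_of_nonneg_right hεrs hs0.le]
  -- t² ≤ ρ² + 2εr²
  have ht1 : t - ρ ≤ 2*ε*r := by rw [hρ] at htr ⊢; linarith
  have ht2 : t + ρ ≤ r := by linarith
  have h2 : t^2 ≤ ρ^2 + 2*ε*r^2 := by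
    nlinarith [mul_le_mul ht1 ht2 (by linarith) (by positivity)]
  -- -2tp ≤ -(8/5)ρs
  have h1a : 2*t*(4/5*s) ≤ 2*t*p := mul_le_mul_of_nonneg_left hp (by linarith)
  have h1b : ρ*s ≤ t*s := mul_le_mul_of_nonneg_right (by linarith) hs0.le
  have h1 : 8/5*ρ*s ≤ 2*t*p := by linarith
  linarith

/-- For all `d ≥ 1`, `M ≥ 2`, `N ≥ 1` there is `ε > 0` such that for every
`x`, every unit vector `θ`, every `r` with `2√d M^(-N) ≤ r < 2√d`, and every `y` on the ray
from `x` in direction `θ` with `B(y,(1/2-ε)r) ⊆ B(x,r) \ {x}`, one has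
`H(x,θ,4/5) ∩ B(x,√d M^(-N)) \ B(x,M^(-2N)) ⊆ B(y,(1/2-ε)r)`. -/
theorem stmt14 (d M N : ℕ) (hd : 1 ≤ d) (hM : 2 ≤ M) (hN : 1 ≤ N) :
    ∃ ε : ℝ, 0 < ε ∧
      ∀ (x θ : EuclideanSpace ℝ (Fin d)), ‖θ‖ = 1 →
        ∀ r : ℝ, 2 * Real.sqrt d * (M : ℝ) ^ (-(N : ℤ)) ≤ r → r < 2 * Real.sqrt d →
        ∀ t : ℝ, 0 ≤ t →
          closedBall (x + t • θ) ((1 / 2 - ε) * r) ⊆ closedBall x r \ {x} →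
          (cone d x θ (4 / 5) ∩ closedBall x (Real.sqrt d * (M : ℝ) ^ (-(N : ℤ)))) \
              closedBall x ((M : ℝ) ^ (-(2 * N : ℤ))) ⊆
            closedBall (x + t • θ) ((1 / 2 - ε) * r) := by
  have hD : 1 ≤ Real.sqrt d := Real.one_le_sqrt.mpr (by exact_mod_cast hd)
  set D : ℝ := Real.sqrt d with hDdef
  set c : ℝ := (M : ℝ) ^ N with hcdef
  have hc : 2 ≤ c := by
    calc (2:ℝ) = 2^1 := (pow_one 2).symm
    _ ≤ 2^N := pow_le_pow_right₀ one_le_two hN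
    _ ≤ (M:ℝ)^N := by
        apply pow_le_pow_left₀ (by norm_num)
        exact_mod_cast hM
  have hc0 : (0:ℝ) < c := by linarith
  have hMN : (M : ℝ) ^ (-(N : ℤ)) = c⁻¹ := by
    rw [zpow_neg, zpow_natCast]
  have hM2N : (M : ℝ) ^ (-(2 * N : ℤ)) = (c^2)⁻¹ := by
    rw [zpow_neg, hcdef, ← pow_mul, ← zpow_natCast (M:ℝ) (N*2)]
    congr 1
    push_cast
    ring
  set ε : ℝ := 1/(100*D*c^2) with hε
  have hε0 : 0 < ε := by
    have hD0 : (0:ℝ) < D := by linarith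
    positivity
  refine ⟨ε, hε0, ?_⟩
  intro x θ hθ r hr1 hr2 t ht0 hball z hz
  rw [hMN] at hr1
  obtain ⟨⟨hzcone, hzball⟩, hzout⟩ := hz
  set s : ℝ := ‖z - x‖ with hsdef
  set p : ℝ := ⟪z - x, θ⟫ with hpdef
  have hs2 : s ≤ D * c⁻¹ := by
    rw [mem_closedBall, dist_eq_norm, hMN] at hzball
    exact hzball
  have hs1 : (c^2)⁻¹ ≤ s := by
    rw [mem_closedBall, dist_eq_norm, hM2N, not_le] at hzout
    exact hzout.le
  have hp : 4/5 * s ≤ p := le_of_lt hzcone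
  -- bounds on t
  set ρ : ℝ := (1/2 - ε) * r with hρdef
  have hr0 : (0:ℝ) < r := by
    have hD0 : (0:ℝ) < D := by linarith
    have : (0:ℝ) < 2 * D * c⁻¹ := by positivity
    linarith
  have hε400 : ε ≤ 1/400 := by
    rw [hε, div_le_div_iff₀ (by positivity) (by norm_num)]
    nlinarith
  have hρ0 : 0 ≤ ρ := by
    have : (0:ℝ) ≤ (1/2 - ε) := by linarith
    rw [hρdef]; positivity
  have hnorm : ∀ a : ℝ, 0 ≤ a → ‖a • θ‖ = a := by
    intro a ha
    rw [norm_smul, hθ, mul_one, Real.norm_eq_abs, abs_of_nonneg ha]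
  have htρ : ρ ≤ t := by
    by_contra h
    push_neg at h
    have hx : x ∈ closedBall (x + t • θ) ((1/2 - ε) * r) := by
      rw [mem_closedBall, dist_eq_norm]
      have : x - (x + t • θ) = -(t • θ) := by abel
      rw [this, norm_neg, hnorm t ht0]
      exact le_of_lt (lt_of_lt_of_le h (le_refl _))
    exact (hball hx).2 rfl
  have htr : t + ρ ≤ r := by
    have hw : x + (t + ρ) • θ ∈ closedBall (x + t • θ) ((1/2 - ε) * r) := by
      rw [mem_closedBall, dist_eq_norm]
      have : x + (t + ρ) • θ - (x + t • θ) = ρ • θ := by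
        rw [add_smul]; abel
      rw [this, hnorm ρ hρ0]
    have := (hball hw).1
    rw [mem_closedBall, dist_eq_norm] at this
    have heq : x + (t + ρ) • θ - x = (t + ρ) • θ := by abel
    rw [heq, hnorm (t + ρ) (by linarith)] at this
    exact this
  -- conclude via key lemma
  have hkey := key14 D c r t s p hD hc hr1 hr2.le htρ (by linarith) hs1 hs2 hp
  rw [mem_closedBall, dist_eq_norm]
  have hexp : ‖z - (x + t • θ)‖^2 = s^2 - 2*t*p + t^2 := by
    have h0 : z - (x + t • θ) = (z - x) - t • θ := by abel
    rw [h0, norm_sub_sq_real, real_inner_smul_right, hnorm t ht0, ← hsdef, ← hpdef]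
    ring
  have hn0 : (0:ℝ) ≤ ‖z - (x + t • θ)‖ := norm_nonneg _
  nlinarith [hexp, hkey, hn0, hρ0]
end
end
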